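/- Let φ₁,…,φ_k : ℝ^d → ℂ be continuous, and assume that for all a₁,…,a_k > 0 there exists ξ̂ ∈ ℝ^d with |φⱼ(ξ̂)| = aⱼ for all j. Fix 1 ≤ p < ∞, exponents α⁰,α¹,…,α^N ∈ ℝ₊^k with α⁰ = Σⱼ θⱼ αʲ for some θⱼ ≥ 0 summing to 1, and δ₁,…,δ_N > 0. Then sup{ ‖|φ|^{α⁰} x‖_{L_p} : x ∈ L_p(ℝ^d), ‖|φ|^{αʲ} x‖_{L_p} ≤ δⱼ for all j } ≥ ∏_{j ∈ J} δⱼ^{θⱼ} whenever the points (αʲ, ln(1/δⱼ)) for j ∈ J := {j : θⱼ > 0} lie on a common supporting hyperplane z = ⟨α, η̂⟩ + â of the convex hull Q of {(αʲ, ln(1/δⱼ))}ⱼ at α⁰; i.e., the supremum equals e^{−S(α⁰)}, where S(α⁰) = max{z : (α⁰,z) ∈ Q}. -/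

import Mathlib

open MeasureTheory ENNReal NNReal

/-- Lower bound for the value of the constrained extremal problem: the supremum of
`‖|φ|^{α⁰} x‖_{L_p}` over admissible `x` is at least `∏ δⱼ^{θⱼ} = e^{-S(α⁰)}` when the
points `(αʲ, ln 1/δⱼ)` with `θⱼ > 0` lie on a supporting hyperplane. -/
theorem stmt7 {d k N : ℕ} (p : ℝ) (hp : 1 ≤ p)
    (φ : Fin k → EuclideanSpace ℝ (Fin d) → ℂ) (hφ : ∀ i, Continuous (φ i))
    (hsurj : ∀ a : Fin k → ℝ, (∀ i, 0 < a i) →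
      ∃ ξ : EuclideanSpace ℝ (Fin d), ∀ i, ‖φ i ξ‖ = a i)
    (α : Fin N → Fin k → ℝ) (hα : ∀ j i, 0 ≤ α j i)
    (θ : Fin N → ℝ) (hθ : ∀ j, 0 ≤ θ j) (hθs : ∑ j, θ j = 1)
    (α0 : Fin k → ℝ) (hα0 : ∀ i, α0 i = ∑ j, θ j * α j i)
    (δ : Fin N → ℝ) (hδ : ∀ j, 0 < δ j)
    (ηhat : Fin k → ℝ) (ahat : ℝ)
    (hsupp : ∀ j, Real.log (1 / δ j) ≤ ∑ i, α j i * ηhat i + ahat)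
    (hface : ∀ j, 0 < θ j → Real.log (1 / δ j) = ∑ i, α j i * ηhat i + ahat) :
    ENNReal.ofReal (∏ j, δ j ^ θ j) ≤
      ⨆ (x : EuclideanSpace ℝ (Fin d) → ℂ)
        (_ : MemLp x (ENNReal.ofReal p) volume)
        (_ : ∀ j, eLpNorm (fun ξ => (∏ i, ‖φ i ξ‖ ^ α j i) • x ξ)
              (ENNReal.ofReal p) volume ≤ ENNReal.ofReal (δ j)),
        eLpNorm (fun ξ => (∏ i, ‖φ i ξ‖ ^ α0 i) • x ξ)
          (ENNReal.ofReal p) volume := by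
  classical
  have hp0 : 0 < p := lt_of_lt_of_le one_pos hp
  set P : ℝ≥0∞ := ENNReal.ofReal p with hPdef
  have hP0 : P ≠ 0 := by
    simp [hPdef, ENNReal.ofReal_eq_zero, not_le, hp0]
  have hPtop : P ≠ ∞ := ENNReal.ofReal_ne_top
  have hPtoReal : P.toReal = p := ENNReal.toReal_ofReal hp0.le
  set A : Fin N → ℝ := fun j => ∑ i, α j i * ηhat i with hA
  set A0 : ℝ := ∑ i, α0 i * ηhat i with hA0def
  have hA0 : A0 = ∑ j, θ j * A j := by
    rw [hA0def]
    simp only [hα0, Finset.sum_mul, hA]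
    rw [Finset.sum_comm]
    congr 1; funext j
    rw [Finset.mul_sum]
    congr 1; funext i; ring
  -- the product of the δ's equals exp(-(A0+ahat))
  have hv : (∏ j, δ j ^ θ j) = Real.exp (-(A0 + ahat)) := by
    have h1 : ∀ j : Fin N, δ j ^ θ j = Real.exp ((-(A j + ahat)) * θ j) := by
      intro j
      rcases (hθ j).lt_or_eq with hj | hj
      · have hlog : Real.log (δ j) = -(A j + ahat) := by
          have := hface j hj
          rw [one_div, Real.log_inv] at this
          linarith
        rw [Real.rpow_def_of_pos (hδ j), hlog]
      · rw [← hj, Real.rpow_zero, mul_zero, Real.exp_zero]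
    rw [Finset.prod_congr rfl fun j _ => h1 j, ← Real.exp_sum]
    congr 1
    have : ∑ j, (-(A j + ahat)) * θ j = -((∑ j, θ j * A j) + ahat * ∑ j, θ j) := by
      rw [Finset.mul_sum, ← Finset.sum_add_distrib, ← Finset.sum_neg_distrib]
      exact Finset.sum_congr rfl fun j _ => by ring
    rw [this, hθs, hA0, mul_one]
  -- the point where the φ's take the prescribed values
  obtain ⟨ξh, hξh⟩ := hsurj (fun i => Real.exp (-ηhat i)) (fun i => Real.exp_pos _)
  have hval : ∀ β : Fin k → ℝ,
      (∏ i, ‖φ i ξh‖ ^ β i) = Real.exp (-∑ i, β i * ηhat i) := by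
    intro β
    have h1 : ∀ i : Fin k, ‖φ i ξh‖ ^ β i = Real.exp (-(β i * ηhat i)) := by
      intro i
      rw [hξh i, Real.rpow_def_of_pos (Real.exp_pos _), Real.log_exp]
      congr 1; ring
    rw [Finset.prod_congr rfl fun i _ => h1 i, ← Real.exp_sum, ← Finset.sum_neg_distrib]
  -- continuity of the weights at ξh
  have hcont : ∀ β : Fin k → ℝ,
      ContinuousAt (fun ξ => ∏ i, ‖φ i ξ‖ ^ β i) ξh := by
    intro β
    apply tendsto_finset_prod
    intro i _
    have h1 : ContinuousAt (fun ξ => ‖φ i ξ‖) ξh :=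
      (continuous_norm.comp (hφ i)).continuousAt
    exact h1.rpow_const (Or.inl (by rw [hξh]; positivity))
  -- nonnegativity of the weights
  have hwnn : ∀ (β : Fin k → ℝ) (ξ : EuclideanSpace ℝ (Fin d)),
      0 ≤ ∏ i, ‖φ i ξ‖ ^ β i :=
    fun β ξ => Finset.prod_nonneg fun i _ => Real.rpow_nonneg (norm_nonneg _) _
  set S : ℝ≥0∞ :=
      ⨆ (x : EuclideanSpace ℝ (Fin d) → ℂ)
        (_ : MemLp x P volume)
        (_ : ∀ j, eLpNorm (fun ξ => (∏ i, ‖φ i ξ‖ ^ α j i) • x ξ)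
              P volume ≤ ENNReal.ofReal (δ j)),
        eLpNorm (fun ξ => (∏ i, ‖φ i ξ‖ ^ α0 i) • x ξ) P volume with hSdef
  -- key claim
  have key : ∀ ε : ℝ, 0 < ε →
      ENNReal.ofReal (Real.exp (-(A0 + ahat)) * Real.exp (-(2 * ε))) ≤ S := by
    intro ε hε
    -- a good neighborhood of ξh
    have hU : ((⋂ j : Fin N, (fun ξ => ∏ i, ‖φ i ξ‖ ^ α j i) ⁻¹'
          Set.Iio (Real.exp (-A j + ε))) ∩
        ((fun ξ => ∏ i, ‖φ i ξ‖ ^ α0 i) ⁻¹'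
          Set.Ioi (Real.exp (-A0 - ε)))) ∈ nhds ξh := by
      apply Filter.inter_mem
      · rw [Filter.iInter_mem]
        intro j
        refine hcont (α j) (Iio_mem_nhds ?_)
        show (∏ i, ‖φ i ξh‖ ^ α j i) < Real.exp (-A j + ε)
        rw [hval (α j)]
        exact Real.exp_lt_exp.2 (by simp [hA]; linarith)
      · refine hcont α0 (Ioi_mem_nhds ?_)
        show Real.exp (-A0 - ε) < ∏ i, ‖φ i ξh‖ ^ α0 i
        rw [hval α0]
        exact Real.exp_lt_exp.2 (by simp [hA0def]; linarith)
    obtain ⟨r, hr, hball⟩ := Metric.mem_nhds_iff.1 hU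
    set B := Metric.ball ξh r with hBdef
    have hBub : ∀ (j : Fin N), ∀ ξ ∈ B,
        (∏ i, ‖φ i ξ‖ ^ α j i) ≤ Real.exp (-A j + ε) := by
      intro j ξ hξ
      have := (hball hξ).1
      rw [Set.mem_iInter] at this
      exact le_of_lt (this j)
    have hBlb : ∀ ξ ∈ B, Real.exp (-A0 - ε) ≤ ∏ i, ‖φ i ξ‖ ^ α0 i :=
      fun ξ hξ => le_of_lt (hball hξ).2
    have hBmeas : MeasurableSet B := measurableSet_ball
    have hB0 : volume B ≠ 0 := (Metric.measure_ball_pos volume ξh hr).ne'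
    have hBtop : volume B ≠ ∞ := measure_ball_lt_top.ne
    set M : ℝ≥0∞ := volume B ^ (1 / p) with hMdef
    have hM0 : M ≠ 0 := by
      simp only [hMdef]
      exact (ENNReal.rpow_pos (hB0.bot_lt) hBtop).ne'
    have hMtop : M ≠ ∞ := by
      simp only [hMdef]
      exact ENNReal.rpow_ne_top_of_nonneg (by positivity) hBtop
    have hMr : 0 < M.toReal := ENNReal.toReal_pos hM0 hMtop
    set c : ℝ := Real.exp (-ahat - ε) / M.toReal with hcdef
    have hc : 0 < c := div_pos (Real.exp_pos _) hMr
    set x : EuclideanSpace ℝ (Fin d) → ℂ := B.indicator (fun _ => (c : ℂ)) with hxdef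
    have hxnorm : eLpNorm x P volume = ENNReal.ofReal (Real.exp (-ahat - ε)) := by
      rw [hxdef, eLpNorm_indicator_const hBmeas hP0 hPtop, hPtoReal]
      have h1 : ‖(c : ℂ)‖ₑ = ENNReal.ofReal c := by
        rw [← ofReal_norm_eq_enorm, Complex.norm_real,
          Real.norm_eq_abs, abs_of_pos hc]
      rw [h1, ← hMdef, ← ENNReal.ofReal_toReal hMtop,
        ← ENNReal.ofReal_mul hc.le, hcdef, div_mul_cancel₀ _ hMr.ne']
    have hmem : MemLp x P volume := by
      rw [hxdef]; exact memLp_indicator_const P hBmeas _ (Or.inr hBtop)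
    -- upper bound for the constraint weights
    have hub : ∀ (β : Fin k → ℝ) (Mb : ℝ), 0 ≤ Mb →
        (∀ ξ ∈ B, (∏ i, ‖φ i ξ‖ ^ β i) ≤ Mb) →
        eLpNorm (fun ξ => (∏ i, ‖φ i ξ‖ ^ β i) • x ξ) P volume ≤
          ENNReal.ofReal Mb * eLpNorm x P volume := by
      intro β Mb hMb hbound
      have h1 : eLpNorm (fun ξ => (∏ i, ‖φ i ξ‖ ^ β i) • x ξ) P volume ≤
          eLpNorm (Mb • x) P volume := by
        apply eLpNorm_mono
        intro ξ
        by_cases hξ : ξ ∈ B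
        · simp only [Pi.smul_apply, norm_smul, Real.norm_eq_abs,
            abs_of_nonneg (hwnn β ξ), abs_of_nonneg hMb]
          exact mul_le_mul_of_nonneg_right (hbound ξ hξ) (norm_nonneg _)
        · simp [hxdef, Set.indicator_of_notMem hξ]
      rw [eLpNorm_const_smul Mb x P volume] at h1
      refine h1.trans (le_of_eq ?_)
      congr 1
      rw [← ofReal_norm_eq_enorm, Real.norm_eq_abs, abs_of_nonneg hMb]
    -- the constraints hold
    have hcons : ∀ j, eLpNorm (fun ξ => (∏ i, ‖φ i ξ‖ ^ α j i) • x ξ)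
        P volume ≤ ENNReal.ofReal (δ j) := by
      intro j
      refine (hub (α j) (Real.exp (-A j + ε)) (Real.exp_pos _).le (hBub j)).trans ?_
      rw [hxnorm, ← ENNReal.ofReal_mul (Real.exp_pos _).le, ← Real.exp_add]
      apply ENNReal.ofReal_le_ofReal
      have hlog : -(A j + ahat) ≤ Real.log (δ j) := by
        have := hsupp j
        rw [one_div, Real.log_inv] at this
        simp only [hA] at this ⊢
        linarith
      calc Real.exp (-A j + ε + (-ahat - ε)) = Real.exp (-(A j + ahat)) := by ring_nf
        _ ≤ Real.exp (Real.log (δ j)) := Real.exp_le_exp.2 hlog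
        _ = δ j := Real.exp_log (hδ j)
    -- lower bound for the objective
    have hlb : ENNReal.ofReal (Real.exp (-A0 - ε)) * eLpNorm x P volume ≤
        eLpNorm (fun ξ => (∏ i, ‖φ i ξ‖ ^ α0 i) • x ξ) P volume := by
      have h1 : eLpNorm ((Real.exp (-A0 - ε)) • x) P volume ≤
          eLpNorm (fun ξ => (∏ i, ‖φ i ξ‖ ^ α0 i) • x ξ) P volume := by
        apply eLpNorm_mono
        intro ξ
        by_cases hξ : ξ ∈ B
        · simp only [Pi.smul_apply, norm_smul, Real.norm_eq_abs,
            abs_of_nonneg (hwnn α0 ξ), abs_of_nonneg (Real.exp_pos (-A0 - ε)).le]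
          exact mul_le_mul_of_nonneg_right (hBlb ξ hξ) (norm_nonneg _)
        · simp [hxdef, Set.indicator_of_notMem hξ]
      rw [eLpNorm_const_smul (Real.exp (-A0 - ε)) x P volume] at h1
      refine le_trans (le_of_eq ?_) h1
      congr 1
      rw [← ofReal_norm_eq_enorm, Real.norm_eq_abs,
        abs_of_nonneg (Real.exp_pos _).le]
    -- put everything together
    calc ENNReal.ofReal (Real.exp (-(A0 + ahat)) * Real.exp (-(2 * ε)))
        = ENNReal.ofReal (Real.exp (-A0 - ε)) * ENNReal.ofReal (Real.exp (-ahat - ε)) := by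
          rw [← ENNReal.ofReal_mul (Real.exp_pos _).le, ← Real.exp_add, ← Real.exp_add]
          congr 2; ring
      _ = ENNReal.ofReal (Real.exp (-A0 - ε)) * eLpNorm x P volume := by rw [hxnorm]
      _ ≤ eLpNorm (fun ξ => (∏ i, ‖φ i ξ‖ ^ α0 i) • x ξ) P volume := hlb
      _ ≤ S := by
          rw [hSdef]
          exact le_iSup_of_le x (le_iSup_of_le hmem (le_iSup_of_le hcons le_rfl))
  -- conclude from the key claim by letting ε → 0
  rw [hv]
  refine ENNReal.le_of_forall_pos_le_add fun ε hε _ => ?_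
  set v : ℝ := Real.exp (-(A0 + ahat)) with hvdef
  have hvpos : 0 < v := Real.exp_pos _
  set ε' : ℝ := (ε : ℝ) / (2 * v) with hε'def
  have hεR : (0 : ℝ) < ε := hε
  have hε' : 0 < ε' := by positivity
  have h1 : v ≤ v * Real.exp (-(2 * ε')) + ε := by
    have h2 : 1 - (2 * ε') ≤ Real.exp (-(2 * ε')) := by
      have := Real.add_one_le_exp (-(2 * ε'))
      linarith
    have h3 : v * (2 * ε') = ε := by
      rw [hε'def]; field_simp
    nlinarith
  calc ENNReal.ofReal v ≤ ENNReal.ofReal (v * Real.exp (-(2 * ε')) + ε) :=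
        ENNReal.ofReal_le_ofReal h1
    _ ≤ ENNReal.ofReal (v * Real.exp (-(2 * ε'))) + ENNReal.ofReal ε :=
        ENNReal.ofReal_add_le
    _ ≤ S + ε := by
        gcongr
        · exact key ε' hε'
        · rw [ENNReal.ofReal_coe_nnreal]
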